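/- arXiv:2601.07747 — 2 statements merged into one kernel-verified Lean document; each statement's English description precedes it below -/
import Mathlib

section
/- Let 𝕆ω be a field of omega-series in a log-atomic monomial T, and write f^† = f'/f. Let f ∈ 𝕆ω be such that f ≉ T^k for every k ∈ ℕ. If f^† ≻ 1/T, then f^{(n+1)} ∼ (f^†)^{n+1}·f for all n ∈ ℕ. -/
/-!
Interface axiomatization of fields of transseries and omega-series, following
Berarducci–Mantova.  We do not construct Hahn fields; instead we record, as a
structure, the properties of the field of omega-series `𝕆ω` in a log-atomic
monomial `T` (an ordered field containing `ℝ`, with `exp`/`log`, the class `J`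
of purely infinite series, and the strongly `ℝ`-linear derivation `D`), and,
as a second structure, the composition `f ∘ x` of omega-series `f` with
elements `x > ℝ` of a confluent field of transseries `𝕌` (confluence is
precisely what guarantees the existence of such a composition, which we take
as primitive data).
-/

/-- Dominance: `a ≼ b` iff `|a| ≤ n * |b|` for some natural number `n`. -/
def domLE {K : Type*} [Field K] [LinearOrder K] [IsStrictOrderedRing K] (a b : K) : Prop :=
  ∃ n : ℕ, |a| ≤ (n : K) * |b|

/-- `a ≺ b` iff `a ≼ b` and `¬ b ≼ a` (equivalently `n * |a| < |b|` for all `n`). -/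
def domLT {K : Type*} [Field K] [LinearOrder K] [IsStrictOrderedRing K] (a b : K) : Prop :=
  domLE a b ∧ ¬ domLE b a

/-- `a ≍ b` iff `a ≼ b` and `b ≼ a`. -/
def domEq {K : Type*} [Field K] [LinearOrder K] [IsStrictOrderedRing K] (a b : K) : Prop :=
  domLE a b ∧ domLE b a

/-- Asymptotic equivalence: `a ∼ b` iff `a - b ≺ a`. -/
def domSim {K : Type*} [Field K] [LinearOrder K] [IsStrictOrderedRing K] (a b : K) : Prop :=
  domLT (a - b) a

/-- `x > ℝ`: `x` is larger than every real number (via the embedding `emb`). -/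
def gtReals {K : Type*} [Field K] [LinearOrder K] [IsStrictOrderedRing K] (emb : ℝ →+* K) (x : K) : Prop :=
  ∀ r : ℝ, emb r < x

/-- Interface for a field of omega-series `𝕆ω` in a log-atomic monomial `T`:
an ordered field containing `ℝ`, equipped with `exp` and `log`, the
distinguished log-atomic element `T > ℝ`, the additive group `J` of purely
infinite series, and the strongly `ℝ`-linear derivation `D` determined by
`D T = 1` and `D (exp γ) = exp γ * D γ`. -/
structure OmegaFieldStruct (O : Type*) [Field O] [LinearOrder O] [IsStrictOrderedRing O] where
  /-- the embedding of the real numbers (series with a single constant term) -/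
  emb : ℝ →+* O
  /-- the log-atomic monomial `T` -/
  T : O
  /-- the (total) exponential, inverse of `log` -/
  exp : O → O
  /-- the logarithm (meaningful on positive elements) -/
  log : O → O
  /-- the class of purely infinite series -/
  J : Set O
  /-- the derivation -/
  D : O → O
  T_gt_reals : gtReals emb T
  exp_add : ∀ a b : O, exp (a + b) = exp a * exp b
  exp_pos : ∀ a : O, 0 < exp a
  exp_strictMono : StrictMono exp
  log_exp : ∀ a : O, log (exp a) = a
  exp_log : ∀ a : O, 0 < a → exp (log a) = a
  exp_emb : ∀ r : ℝ, exp (emb r) = emb (Real.exp r)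
  /-- growth axiom: `(log 𝔪)^n < 𝔪`, extended to all positive infinite elements -/
  log_pow_lt : ∀ a : O, gtReals emb a → ∀ n : ℕ, (log a) ^ n < a
  J_zero : (0 : O) ∈ J
  J_add : ∀ a ∈ J, ∀ b ∈ J, a + b ∈ J
  J_neg : ∀ a ∈ J, -a ∈ J
  /-- purely infinite series are either zero or dominate `1` -/
  J_infinite : ∀ γ ∈ J, γ ≠ 0 → domLT 1 γ
  /-- `T` is log-atomic: its iterated logarithms are monomials `> 1`,
  hence purely infinite -/
  logIter_T_mem_J : ∀ n : ℕ, (log)^[n] T ∈ J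
  D_add : ∀ a b : O, D (a + b) = D a + D b
  D_mul : ∀ a b : O, D (a * b) = D a * b + a * D b
  D_T : D T = 1
  D_emb : ∀ r : ℝ, D (emb r) = 0
  D_exp : ∀ a : O, D (exp a) = exp a * D a
  /-- the H-field property: positive infinite elements have positive derivative -/
  D_pos_of_gt_reals : ∀ a : O, gtReals emb a → 0 < D a
  /-- the constants of the derivation are exactly the reals -/
  D_eq_zero_iff : ∀ a : O, D a = 0 ↔ ∃ r : ℝ, a = emb r

/-- Interface for the composition of omega-series by elements `x > ℝ` of a
confluent field of transseries `U`: for each such `x`, `f ↦ comp f x` is the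
unique strongly `ℝ`-linear ordered field embedding with `comp T x = x` and
`comp (exp γ) x = expU (comp γ x)`.  Confluence of `U` is what guarantees the
existence of this composition, which we take as primitive data. -/
structure CompStruct (O U : Type*) [Field O] [LinearOrder O] [IsStrictOrderedRing O] [Field U] [LinearOrder U] [IsStrictOrderedRing U]
    (Ω : OmegaFieldStruct O) where
  /-- the embedding of the real numbers into `U` -/
  embU : ℝ →+* U
  /-- the exponential of `U` -/
  expU : U → U
  /-- the logarithm of `U` (meaningful on positive elements) -/
  logU : U → U
  /-- the composition `f ∘ x` of an omega-series `f` with `x ∈ U`,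
  meaningful for `x > ℝ` -/
  comp : O → U → U
  expU_add : ∀ a b : U, expU (a + b) = expU a * expU b
  expU_pos : ∀ a : U, 0 < expU a
  expU_strictMono : StrictMono expU
  logU_expU : ∀ a : U, logU (expU a) = a
  expU_logU : ∀ a : U, 0 < a → expU (logU a) = a
  comp_add : ∀ (f g : O) (x : U), gtReals embU x →
    comp (f + g) x = comp f x + comp g x
  comp_mul : ∀ (f g : O) (x : U), gtReals embU x →
    comp (f * g) x = comp f x * comp g x
  comp_emb : ∀ (r : ℝ) (x : U), gtReals embU x → comp (Ω.emb r) x = embU r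
  comp_T : ∀ x : U, gtReals embU x → comp Ω.T x = x
  comp_exp : ∀ (f : O) (x : U), gtReals embU x →
    comp (Ω.exp f) x = expU (comp f x)
  comp_log : ∀ (f : O) (x : U), gtReals embU x → 0 < f →
    comp (Ω.log f) x = logU (comp f x)
  /-- right composition is an ordered field embedding -/
  comp_strictMono : ∀ x : U, gtReals embU x → StrictMono fun f : O => comp f x

/-!
If `u ≻ 1/T` then `u⁻¹ ≺ T`; since the derivation preserves `≺` against elements `≻ 1` (a
consequence of the H-field axiom), `(u⁻¹)' = -u^†/u ≺ T' = 1`, that is `u^† ≺ u`. The logarithmic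
derivatives `u_m` of `f⁽ᵐ⁾` satisfy `u_{m+1} = u_m + u_m^†`, so by induction `u_m ∼ f^†` for
all `m`, and `f⁽ⁿ⁾ = u_{n-1} ⋯ u_0 f ∼ (f^†)ⁿ f`. Dominance is read off the valuation
`ArchimedeanClass.mk`.
-/

open ArchimedeanClass

section Dominance

variable {K : Type*} [Field K] [LinearOrder K] [IsStrictOrderedRing K] {a b c d : K}

theorem domLE_iff_mk_le : domLE a b ↔ mk b ≤ mk a := by
  simp [domLE, mk_le_mk, nsmul_eq_mul]

theorem domLT_iff_mk_lt : domLT a b ↔ mk b < mk a := by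
  rw [domLT, domLE_iff_mk_le, domLE_iff_mk_le, lt_iff_le_not_ge]

theorem domLT_iff_forall_natCast_mul_lt : domLT a b ↔ ∀ n : ℕ, (n : K) * |a| < |b| := by
  simp [domLT_iff_mk_lt, mk_lt_mk, nsmul_eq_mul]

theorem domSim_iff_mk_lt : domSim a b ↔ mk a < mk (a - b) := domLT_iff_mk_lt

theorem domLT.ne_zero (h : domLT a b) : b ≠ 0 := by
  rw [← mk_eq_top_iff.ne]
  exact (domLT_iff_mk_lt.mp h).ne_top

theorem domLT_neg_left_iff : domLT (-a) b ↔ domLT a b := by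
  simp only [domLT_iff_mk_lt, mk_neg]

theorem domLT_neg_right_iff : domLT a (-b) ↔ domLT a b := by
  simp only [domLT_iff_mk_lt, mk_neg]

theorem domLT.mul_right (h : domLT a b) (hc : c ≠ 0) : domLT (a * c) (b * c) := by
  rw [domLT_iff_mk_lt, mk_mul, mk_mul]
  exact (add_lt_add_iff_left_of_ne_top (mk_eq_top_iff.not.mpr hc)).mpr (domLT_iff_mk_lt.mp h)

theorem domSim.mk_eq (h : domSim a b) : mk a = mk b := by
  rw [← mk_sub_eq_mk_left (domSim_iff_mk_lt.mp h), sub_sub_cancel]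

theorem domSim.ne_zero (h : domSim a b) : a ≠ 0 := by
  rw [← mk_eq_top_iff.ne]
  exact (domSim_iff_mk_lt.mp h).ne_top

theorem domSim_refl (ha : a ≠ 0) : domSim a a := by
  rw [domSim_iff_mk_lt, sub_self, mk_zero, lt_top_iff_ne_top, Ne, mk_eq_top_iff]
  exact ha

theorem domSim.symm (h : domSim a b) : domSim b a := by
  rw [domSim_iff_mk_lt, mk_sub_comm, ← h.mk_eq]
  exact domSim_iff_mk_lt.mp h

theorem domSim.trans (hab : domSim a b) (hbc : domSim b c) : domSim a c := by
  rw [domSim_iff_mk_lt, ← sub_add_sub_cancel a b c]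
  refine lt_of_lt_of_le (lt_min ?_ ?_) (min_le_mk_add _ _)
  · exact domSim_iff_mk_lt.mp hab
  · exact hab.mk_eq ▸ domSim_iff_mk_lt.mp hbc

theorem domSim.mul (hab : domSim a b) (hcd : domSim c d) : domSim (a * c) (b * d) := by
  have ha : mk a ≠ ⊤ := mk_eq_top_iff.not.mpr hab.ne_zero
  have hc : mk c ≠ ⊤ := mk_eq_top_iff.not.mpr hcd.ne_zero
  rw [domSim_iff_mk_lt, show a * c - b * d = (a - b) * c + b * (c - d) by ring]
  refine lt_of_lt_of_le (lt_min ?_ ?_) (min_le_mk_add _ _)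
  · rw [mk_mul, mk_mul]
    exact (add_lt_add_iff_left_of_ne_top hc).mpr (domSim_iff_mk_lt.mp hab)
  · rw [mk_mul, mk_mul, ← hab.mk_eq]
    exact (add_lt_add_iff_right_of_ne_top ha).mpr (domSim_iff_mk_lt.mp hcd)

theorem domSim_add_of_domLT (h : domLT c a) : domSim (a + c) a := by
  have hac := domLT_iff_mk_lt.mp h
  rw [domSim_iff_mk_lt, add_sub_cancel_left, mk_add_eq_mk_left hac]
  exact hac

theorem domLT.trans_domSim (hab : domLT a b) (hbc : domSim b c) : domLT a c := by
  rw [domLT_iff_mk_lt, ← hbc.mk_eq]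
  exact domLT_iff_mk_lt.mp hab

end Dominance

namespace OmegaFieldStruct

variable {O : Type*} [Field O] [LinearOrder O] [IsStrictOrderedRing O] (Ω : OmegaFieldStruct O)
  {a b u v : O}

def addMonoidHomD : O →+ O := AddMonoidHom.mk' Ω.D Ω.D_add

theorem D_neg (a : O) : Ω.D (-a) = -Ω.D a := map_neg Ω.addMonoidHomD a

theorem D_sub (a b : O) : Ω.D (a - b) = Ω.D a - Ω.D b := map_sub Ω.addMonoidHomD a b

theorem D_natCast_mul (n : ℕ) (a : O) : Ω.D (n * a) = n * Ω.D a := by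
  rw [← nsmul_eq_mul, ← nsmul_eq_mul]
  exact map_nsmul Ω.addMonoidHomD n a

def logDeriv (a : O) : O := Ω.D a / a

theorem ne_zero_of_logDeriv_ne_zero (h : Ω.logDeriv a ≠ 0) : a ≠ 0 := by
  rintro rfl
  simp [logDeriv] at h

theorem D_inv (hu : u ≠ 0) : Ω.D u⁻¹ = -(Ω.logDeriv u / u) := by
  rw [logDeriv]
  have h := Ω.D_mul u u⁻¹
  rw [mul_inv_cancel₀ hu, show Ω.D 1 = 0 by simpa using Ω.D_emb 1] at h
  generalize Ω.D u⁻¹ = w at h ⊢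
  field_simp at h ⊢
  linear_combination -h

theorem logDeriv_mul_self (ha : a ≠ 0) : Ω.logDeriv a * a = Ω.D a :=
  div_mul_cancel₀ _ ha

theorem logDeriv_mul (hu : u ≠ 0) (hv : v ≠ 0) :
    Ω.logDeriv (u * v) = Ω.logDeriv u + Ω.logDeriv v := by
  simp only [logDeriv, Ω.D_mul]
  field_simp

theorem emb_monotone : Monotone Ω.emb := by
  intro r s hrs
  have h : 0 ≤ Ω.emb (√(s - r)) ^ 2 := sq_nonneg _
  rw [← map_pow, Real.sq_sqrt (sub_nonneg.mpr hrs), map_sub] at h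
  exact sub_nonneg.mp h

theorem gtReals_of_forall_natCast_lt (h : ∀ n : ℕ, (n : O) < a) : gtReals Ω.emb a := fun r =>
  calc Ω.emb r ≤ Ω.emb (⌈r⌉₊ : ℝ) := Ω.emb_monotone (Nat.le_ceil r)
    _ = (⌈r⌉₊ : O) := map_natCast _ _
    _ < a := h _

theorem one_domLT_T : domLT 1 Ω.T := by
  rw [domLT_iff_forall_natCast_mul_lt]
  intro n
  simpa [abs_of_pos (by simpa using Ω.T_gt_reals 0)] using Ω.T_gt_reals n

theorem D_domLT_D_of_pos (hb : 0 < b) (hb1 : domLT 1 b) (hab : domLT a b) :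
    domLT (Ω.D a) (Ω.D b) := by
  rw [domLT_iff_forall_natCast_mul_lt, abs_one] at hb1
  rw [domLT_iff_forall_natCast_mul_lt] at hab ⊢
  intro n
  -- `b - n c > ℝ` for `c = ±a`, so the H-field axiom gives `n D c < D b`.
  have hside : ∀ c, |c| = |a| → n * Ω.D c < Ω.D b := by
    intro c hc
    have hc_le : n * c ≤ n * |a| := hc ▸ mul_le_mul_of_nonneg_left (le_abs_self c) n.cast_nonneg
    have hgt : gtReals Ω.emb (b - n * c) := by
      refine Ω.gtReals_of_forall_natCast_lt fun m => ?_
      have hm := hb1 (2 * m)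
      have hna := hab (2 * n)
      push_cast at hm hna
      rw [abs_of_pos hb] at hm hna
      linarith
    simpa [Ω.D_sub, Ω.D_natCast_mul] using Ω.D_pos_of_gt_reals _ hgt
  have h₁ := hside a rfl
  have h₂ := hside (-a) (abs_neg a)
  rw [Ω.D_neg] at h₂
  have h : n * |Ω.D a| < Ω.D b := by
    rcases abs_cases (Ω.D a) with ⟨habs, _⟩ | ⟨habs, _⟩ <;> rw [habs] <;> assumption
  exact h.trans_le (le_abs_self _)

theorem D_domLT_D (hb1 : domLT 1 b) (hab : domLT a b) : domLT (Ω.D a) (Ω.D b) := by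
  rcases lt_trichotomy b 0 with hb | hb | hb
  · have h := Ω.D_domLT_D_of_pos (neg_pos.mpr hb) (domLT_neg_right_iff.mpr hb1)
      (domLT_neg_right_iff.mpr hab)
    rwa [Ω.D_neg, domLT_neg_right_iff] at h
  · exact absurd hb hab.ne_zero
  · exact Ω.D_domLT_D_of_pos hb hb1 hab

theorem logDeriv_domLT_self (hu : domLT (1 / Ω.T) u) : domLT (Ω.logDeriv u) u := by
  have hu0 := hu.ne_zero
  have hT0 : Ω.T ≠ 0 := Ω.one_domLT_T.ne_zero
  have hinv : domLT u⁻¹ Ω.T := by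
    convert hu.mul_right (mul_ne_zero hT0 (inv_ne_zero hu0)) using 1 <;> field_simp
  have hD : domLT (Ω.D u⁻¹) 1 := Ω.D_T ▸ Ω.D_domLT_D Ω.one_domLT_T hinv
  rw [Ω.D_inv hu0, domLT_neg_left_iff] at hD
  simpa only [div_mul_cancel₀ _ hu0, one_mul] using hD.mul_right hu0

theorem logDeriv_iterate_D_domSim (ha : domLT (1 / Ω.T) (Ω.logDeriv a)) :
    ∀ m, domSim (Ω.logDeriv (Ω.D^[m] a)) (Ω.logDeriv a)
  | 0 => domSim_refl ha.ne_zero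
  | m + 1 => by
    have ih := logDeriv_iterate_D_domSim ha m
    set u := Ω.logDeriv (Ω.D^[m] a)
    have hu0 : u ≠ 0 := ih.ne_zero
    have hstep : Ω.logDeriv (Ω.D^[m + 1] a) = u + Ω.logDeriv u := by
      have hm0 := Ω.ne_zero_of_logDeriv_ne_zero hu0
      rw [Function.iterate_succ_apply', ← Ω.logDeriv_mul_self hm0, Ω.logDeriv_mul hu0 hm0,
        add_comm]
    rw [hstep]
    exact (domSim_add_of_domLT (Ω.logDeriv_domLT_self (ha.trans_domSim ih.symm))).trans ih

theorem iterate_D_domSim (ha : domLT (1 / Ω.T) (Ω.logDeriv a)) :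
    ∀ n, domSim (Ω.D^[n] a) (Ω.logDeriv a ^ n * a)
  | 0 => by
    simpa using domSim_refl (Ω.ne_zero_of_logDeriv_ne_zero ha.ne_zero)
  | n + 1 => by
    have ih := iterate_D_domSim ha n
    rw [Function.iterate_succ_apply', ← Ω.logDeriv_mul_self ih.ne_zero, pow_succ', mul_assoc]
    exact (Ω.logDeriv_iterate_D_domSim ha n).mul ih

end OmegaFieldStruct

theorem statement10_general {O : Type*} [Field O] [LinearOrder O] [IsStrictOrderedRing O]
    (Ω : OmegaFieldStruct O) (f : O)
    (hdag : domLT (1 / Ω.T) (Ω.D f / f)) (n : ℕ) :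
    domSim ((Ω.D)^[n + 1] f) ((Ω.D f / f) ^ (n + 1) * f) :=
  Ω.iterate_D_domSim hdag (n + 1)

/-- **Iterated derivatives, rapidly varying case.** Let `f ∈ 𝕆ω` with
`f ≉ T^k` for every `k ∈ ℕ`.  If `f^† ≻ 1/T` (where `f^† = f'/f`), then
`f⁽ⁿ⁺¹⁾ ∼ (f^†)^{n+1}·f` for all `n ∈ ℕ`. -/
theorem statement10 {O : Type*} [Field O] [LinearOrder O] [IsStrictOrderedRing O]
    (Ω : OmegaFieldStruct O) (f : O)
    (hf : ∀ k : ℕ, ¬ domEq f (Ω.T ^ k))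
    (hdag : domLT (1 / Ω.T) (Ω.D f / f)) (n : ℕ) :
    domSim ((Ω.D)^[n + 1] f) ((Ω.D f / f) ^ (n + 1) * f) :=
  statement10_general Ω f hdag n
end

section
/- For every n ∈ ℕ with n ≥ 1 there exists a real number B such that for all real x > B: log^[k](x) > 0 for every k < n, the n-th iterate log^[n] of the natural logarithm is differentiable at x with derivative (log^[n])'(x) = 1/(x · log(x) · log^[2](x) ⋯ log^[n−1](x)) = (∏_{k=0}^{n−1} log^[k](x))⁻¹, and in particular 0 < (log^[n])'(x) ≤ 1/x. -/
/-! Differentiating `log ∘ log^[n]` by the chain rule multiplies the derivative by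
`(log^[n] x)⁻¹`, which gives the product formula by induction for every `x` at which no
iterate below `n` vanishes. Each iterate tends to infinity, so eventually all of them
exceed `1`; then the product is at least its first factor `x`. -/

open Filter

theorem Real.hasDerivAt_iterate_log {x : ℝ} :
    ∀ {n : ℕ}, (∀ k < n, Real.log^[k] x ≠ 0) →
      HasDerivAt (Real.log^[n]) (∏ k ∈ Finset.range n, Real.log^[k] x)⁻¹ x
  | 0, _ => by simpa using hasDerivAt_id x
  | n + 1, h => by
    rw [Function.iterate_succ', Finset.prod_range_succ, mul_inv_rev]
    exact (Real.hasDerivAt_log (h n n.lt_succ_self)).comp x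
      (Real.hasDerivAt_iterate_log fun k hk => h k (by omega))

theorem Real.eventually_one_lt_iterate_log (n : ℕ) :
    ∀ᶠ x in atTop, ∀ k < n, 1 < Real.log^[k] x :=
  (eventually_all_finite (Set.finite_lt_nat n)).2 fun k _ =>
    (Real.tendsto_log_atTop.iterate k).eventually_gt_atTop 1

/-- For every `n ∈ ℕ` with `n ≥ 1` there is a real number `B` such that for
all real `x > B`: `log^[k] x > 0` for every `k < n`, the `n`-th iterate
`log^[n]` of the natural logarithm is differentiable at `x` with derivative
`(log^[n])'(x) = 1/(x · log x · log^[2] x ⋯ log^[n−1] x)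
             = (∏_{k=0}^{n−1} log^[k] x)⁻¹`,
and in particular `0 < (log^[n])'(x) ≤ 1/x`. -/
theorem statement17 (n : ℕ) (hn : 1 ≤ n) :
    ∃ B : ℝ, ∀ x : ℝ, B < x →
      (∀ k < n, 0 < (Real.log)^[k] x) ∧
      HasDerivAt ((Real.log)^[n])
        ((∏ k ∈ Finset.range n, (Real.log)^[k] x)⁻¹) x ∧
      0 < (∏ k ∈ Finset.range n, (Real.log)^[k] x)⁻¹ ∧
      (∏ k ∈ Finset.range n, (Real.log)^[k] x)⁻¹ ≤ 1 / x := by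
  obtain ⟨B, hB⟩ := (Real.eventually_one_lt_iterate_log n).exists_forall_of_atTop
  refine ⟨B, fun x hx => ?_⟩
  have hlog : ∀ k < n, 1 < Real.log^[k] x := hB x hx.le
  have hpos : ∀ k < n, 0 < Real.log^[k] x := fun k hk => one_pos.trans (hlog k hk)
  have hx_le : x ≤ ∏ k ∈ Finset.range n, Real.log^[k] x := by
    simpa using Finset.prod_le_prod_of_subset_of_one_le (s := {0})
      (Finset.singleton_subset_iff.2 (Finset.mem_range.2 hn)) (by simpa using (hpos 0 hn).le)
      fun k hk _ => (hlog k (Finset.mem_range.1 hk)).le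
  refine ⟨hpos, Real.hasDerivAt_iterate_log fun k hk => (hpos k hk).ne',
    inv_pos.2 ((hpos 0 hn).trans_le hx_le), ?_⟩
  rw [one_div]
  exact inv_anti₀ (hpos 0 hn) hx_le
end
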